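/- arXiv:2410.18636 — 2 statements merged into one kernel-verified Lean document; each statement's English description precedes it below -/
import Mathlib

section
/- Policy gradient theorem for finite-horizon trajectories: if trajectories τ = (a_1, ..., a_T) have probability P_θ(τ) = ∏_{t=1}^T π_θ(a_t | h_t) · p(transitions) with only the policy factors depending on θ, and J(θ) = E_{τ ~ P_θ}[R(τ)] for a bounded reward function R, then ∇_θ J(θ) = E_{τ ~ P_θ}[R(τ) · Σ_{t=1}^T ∇_θ log π_θ(a_t | h_t)]. -/
open Finset

/-- Policy gradient theorem for finite-horizon trajectories: if trajectories `τ` have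
probability `P θ τ = (∏ t, π θ (a_t τ) (h_t τ)) * p τ` where only the policy factors
depend on `θ`, and `J θ = E_{τ ~ P θ}[R τ]` for a bounded reward `R`, then
`∇_θ J θ = E_{τ ~ P θ}[R τ • Σ_t ∇_θ log π_θ(a_t | h_t)]`. -/
theorem policy_gradient_theorem
    {Traj Act Hist : Type*} [Fintype Traj] {d T : ℕ}
    (act : Fin T → Traj → Act) (hist : Fin T → Traj → Hist)
    (π : (Fin d → ℝ) → Act → Hist → ℝ)
    (p : Traj → ℝ)
    (P : (Fin d → ℝ) → Traj → ℝ)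
    (hP : ∀ θ τ, P θ τ = (∏ t, π θ (act t τ) (hist t τ)) * p τ)
    (hπpos : ∀ θ a h, 0 < π θ a h)
    (hpnn : ∀ τ, 0 ≤ p τ)
    (hπdiff : ∀ a h, Differentiable ℝ (fun θ => π θ a h))
    (hnorm : ∀ θ, ∑ τ, P θ τ = 1)
    (R : Traj → ℝ) (C : ℝ) (hR : ∀ τ, |R τ| ≤ C)
    (θ : Fin d → ℝ) :
    fderiv ℝ (fun θ' => ∑ τ, P θ' τ * R τ) θ
      = ∑ τ, P θ τ • (R τ •
          ∑ t, fderiv ℝ (fun θ' => Real.log (π θ' (act t τ) (hist t τ))) θ) := by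
  have key : ∀ τ : Traj, fderiv ℝ (fun θ' => P θ' τ * R τ) θ
      = P θ τ • (R τ •
          ∑ t, fderiv ℝ (fun θ' => Real.log (π θ' (act t τ) (hist t τ))) θ) := by
    intro τ
    set f : Fin T → (Fin d → ℝ) → ℝ := fun t θ' => π θ' (act t τ) (hist t τ) with hf
    have hft : ∀ t, HasFDerivAt (f t) (fderiv ℝ (f t) θ) θ :=
      fun t => ((hπdiff (act t τ) (hist t τ)) θ).hasFDerivAt
    have hprod : HasFDerivAt (fun θ' => ∏ t, f t θ')
        (∑ t, (∏ j ∈ Finset.univ.erase t, f j θ) • fderiv ℝ (f t) θ) θ :=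
      HasFDerivAt.finset_prod (fun t _ => hft t)
    have hlhs : HasFDerivAt (fun θ' => P θ' τ * R τ)
        ((p τ * R τ) • ∑ t, (∏ j ∈ Finset.univ.erase t, f j θ) • fderiv ℝ (f t) θ) θ := by
      have heq : (fun θ' => P θ' τ * R τ) = fun θ' => (p τ * R τ) * ∏ t, f t θ' := by
        funext θ'; rw [hP]; ring
      rw [heq]
      simpa [smul_smul] using hprod.const_mul (p τ * R τ)
    rw [hlhs.fderiv]
    have hlog : ∀ t, fderiv ℝ (fun θ' => Real.log (π θ' (act t τ) (hist t τ))) θ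
        = (f t θ)⁻¹ • fderiv ℝ (f t) θ := by
      intro t
      exact ((hft t).log (ne_of_gt (hπpos θ _ _))).fderiv
    simp only [hlog, hP, Finset.smul_sum]
    refine Finset.sum_congr rfl fun t _ => ?_
    have hprod_eq : f t θ * ∏ j ∈ Finset.univ.erase t, f j θ = ∏ j, f j θ :=
      Finset.mul_prod_erase Finset.univ (fun j => f j θ) (Finset.mem_univ t)
    have hne : f t θ ≠ 0 := ne_of_gt (hπpos θ _ _)
    have hinv : (f t θ)⁻¹ * f t θ = 1 := inv_mul_cancel₀ hne
    have hsc : (∏ t : Fin T, π θ (act t τ) (hist t τ)) * p τ * R τ * (f t θ)⁻¹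
        = p τ * R τ * ∏ j ∈ Finset.univ.erase t, f j θ := by
      rw [show (∏ t : Fin T, π θ (act t τ) (hist t τ)) = ∏ j, f j θ from rfl, ← hprod_eq]
      linear_combination (p τ * R τ * ∏ j ∈ Finset.univ.erase t, f j θ) * hinv
    simp only [smul_smul]
    refine congrArg (fun c : ℝ => c • fderiv ℝ (f t) θ) ?_
    rw [show (∏ t : Fin T, π θ (act t τ) (hist t τ)) = ∏ j, f j θ from rfl, ← hprod_eq]
    linear_combination (-(p τ * R τ * ∏ j ∈ Finset.univ.erase t, f j θ)) * hinv
  have hdiff : ∀ τ ∈ (Finset.univ : Finset Traj),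
      DifferentiableAt ℝ (fun θ' => P θ' τ * R τ) θ := by
    intro τ _
    have heq : (fun θ' => P θ' τ * R τ)
        = fun θ' => (∏ t, π θ' (act t τ) (hist t τ)) * p τ * R τ := by
      funext θ'; rw [hP]
    rw [heq]
    have hprod : HasFDerivAt (fun θ' => ∏ t, π θ' (act t τ) (hist t τ))
        (∑ t, (∏ j ∈ Finset.univ.erase t, π θ (act j τ) (hist j τ)) •
          fderiv ℝ (fun θ' => π θ' (act t τ) (hist t τ)) θ) θ :=
      HasFDerivAt.finset_prod (fun t _ => ((hπdiff (act t τ) (hist t τ)) θ).hasFDerivAt)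
    exact (hprod.differentiableAt.mul_const _).mul_const _
  rw [fderiv_fun_sum hdiff]
  exact Finset.sum_congr rfl fun τ _ => key τ
end

section
/- Unbiasedness of COALA-PG in the batched setting: consider B parallel trajectories where rewards in the current inner episode of trajectory b depend only on trajectory b's own actions, while rewards in later inner episodes may depend on all B trajectories (through a parameter update at episode boundaries). Then E[Σ_b Σ_l ∇_θ log π_θ(a_l^b | h_l^b) · ((1/B) Σ_{l'≥l, l'≤ m_l T} r_{l'}^b + (1/B) Σ_{b'} Σ_{l' > m_l T} r_{l'}^{b'})] equals E[Σ_b Σ_l ∇_θ log π_θ(a_l^b | h_l^b) · (1/B) Σ_{b'} Σ_{l'≥l} r_{l'}^{b'}], i.e., dropping the cross-trajectory reward terms within the current inner episode does not change the expectation. -/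
/-!
It suffices to show `E[r_{l'}^{b'} · ∇ log π(a_l^b | h_l^b)] = 0` whenever `b' ≠ b` and `l ≤ l'`
lie in the same inner episode. Order the positions `(c, j)` lexicographically by inner episode,
then trajectory (with `b` after all others), then step (`stepRank`). Each factor
`π(a_j^c | h_j^c) · e_j^c` of the density depends only on its own position and on positions of
smaller rank, and sums to one over its own position, while `r_{l'}^{b'}` and `h_l^b` depend only
on positions of rank below `(b, l)`. Summing out the positions above `(b, l)`, from the top down,
removes their factors; summing out `(b, l)` itself then leaves
`r · Σ_a π(a | h) ∇ log π(a | h) = r · ∇ Σ_a π(a | h) = 0`.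
-/

open Finset Function

theorem DependsOn.apply_update_of_notMem {ι β : Type*} {X : ι → Type*} [DecidableEq ι]
    {f : (∀ i, X i) → β} {s : Set ι} (hf : DependsOn f s) {p : ι} (hp : p ∉ s)
    (ω : ∀ i, X i) (x : X p) : f (Function.update ω p x) = f ω :=
  hf fun _ hi => Function.update_of_ne (ne_of_mem_of_not_mem hi hp) _ _

section CausalFactorization

variable {ι X : Type*} [Fintype ι] [DecidableEq ι] [Fintype X]

theorem Fintype.sum_sum_update {M : Type*} [AddCommMonoid M] (p : ι) (f : (ι → X) → M) :
    ∑ ω, ∑ x, f (update ω p x) = Fintype.card X • ∑ ω, f ω := by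
  have hinv : Involutive fun q : (ι → X) × X => (update q.1 p q.2, q.1 p) := by
    rintro ⟨ω, x⟩
    simp
  calc ∑ ω, ∑ x, f (update ω p x) = ∑ q : (ι → X) × X, f (hinv.toPerm _ q).1 :=
        (Fintype.sum_prod_type' _).symm
    _ = ∑ q : (ι → X) × X, f q.1 := Equiv.sum_comp _ (fun q : (ι → X) × X => f q.1)
    _ = Fintype.card X • ∑ ω, f ω := by
        rw [Fintype.sum_prod_type_right]
        simp [Finset.smul_sum]

variable {E : Type*} [AddCommGroup E] [Module ℝ E]

theorem card_smul_sum_prod_smul_eq_sum_prod_erase_smul (F : ι → (ι → X) → ℝ) (G : (ι → X) → E)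
    {S : Finset ι} {p : ι} (hp : p ∈ S)
    (hF : ∀ q ∈ S.erase p, ∀ ω x, F q (update ω p x) = F q ω) :
    (Fintype.card X : ℝ) • ∑ ω, (∏ i ∈ S, F i ω) • G ω
      = ∑ ω, (∏ i ∈ S.erase p, F i ω) • ∑ x, F p (update ω p x) • G (update ω p x) := by
  have hA : ∀ ω x, ∏ i ∈ S.erase p, F i (update ω p x) = ∏ i ∈ S.erase p, F i ω :=
    fun ω x => prod_congr rfl fun q hq => hF q hq ω x
  simp_rw [Nat.cast_smul_eq_nsmul, ← Fintype.sum_sum_update p, ← mul_prod_erase S _ hp, hA,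
    Finset.smul_sum, smul_smul, mul_comm]

theorem sum_prod_smul_eq_zero_of_dependsOn {α : Type*} [LinearOrder α] (ρ : ι → α)
    (F : ι → (ι → X) → ℝ) (G : (ι → X) → E) (p₀ : ι)
    (hF : ∀ i, DependsOn (F i) (insert i {j | ρ j < ρ i}))
    (hF_sum : ∀ i ω, ∑ x, F i (update ω i x) = 1)
    (hG : DependsOn G (insert p₀ {j | ρ j < ρ p₀}))
    (hG_mean : ∀ ω, ∑ x, F p₀ (update ω p₀ x) • G (update ω p₀ x) = 0)
    (S : Finset ι) (hp₀ : p₀ ∈ S) :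
    ∑ ω, (∏ i ∈ S, F i ω) • G ω = 0 := by
  rcases isEmpty_or_nonempty X with hX | hX
  · have : IsEmpty (ι → X) := ⟨fun ω => hX.false (ω p₀)⟩
    simp
  have hcard : (Fintype.card X : ℝ) ≠ 0 := Nat.cast_ne_zero.2 Fintype.card_ne_zero
  induction S using Finset.strongInduction with
  | H S ih =>
  rw [← smul_right_injective E hcard |>.eq_iff, smul_zero]
  by_cases h : ∃ q ∈ S.erase p₀, ρ p₀ ≤ ρ q
  · obtain ⟨q, hqS, hq⟩ := h
    obtain ⟨p, hpS, hpmax⟩ := (S.erase p₀).exists_max_image ρ ⟨q, hqS⟩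
    have hpp₀ : p ≠ p₀ := ne_of_mem_erase hpS
    have hp₀p : ρ p₀ ≤ ρ p := hq.trans (hpmax q hqS)
    have hGp : ∀ ω x, G (update ω p x) = G ω :=
      hG.apply_update_of_notMem (by simp [hpp₀, hp₀p.not_gt])
    rw [card_smul_sum_prod_smul_eq_sum_prod_erase_smul F G (mem_of_mem_erase hpS)]
    · simp_rw [hGp, ← Finset.sum_smul, hF_sum, one_smul]
      exact ih _ (erase_ssubset (mem_of_mem_erase hpS)) (mem_erase.2 ⟨hpp₀.symm, hp₀⟩)
    · intro i hi
      refine (hF i).apply_update_of_notMem ?_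
      rcases eq_or_ne i p₀ with rfl | hip₀
      · simp [hpp₀, hp₀p.not_gt]
      · simp [(ne_of_mem_erase hi).symm, (hpmax i (mem_erase.2 ⟨hip₀, mem_of_mem_erase hi⟩)).not_gt]
  · push Not at h
    rw [card_smul_sum_prod_smul_eq_sum_prod_erase_smul F G hp₀]
    · simp_rw [hG_mean, smul_zero, sum_const_zero]
    · intro i hi
      refine (hF i).apply_update_of_notMem ?_
      simp [(ne_of_mem_erase hi).symm, (h i hi).le]

end CausalFactorization

theorem sum_smul_fderiv_log_eq_zero {V α : Type*} [NormedAddCommGroup V] [NormedSpace ℝ V]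
    [Fintype α] (p : V → α → ℝ) (θ : V) (hpos : ∀ a, 0 < p θ a)
    (hdiff : ∀ a, DifferentiableAt ℝ (fun θ' => p θ' a) θ) (hsum : ∀ θ', ∑ a, p θ' a = 1) :
    ∑ a, p θ a • fderiv ℝ (fun θ' => Real.log (p θ' a)) θ = 0 := by
  have hlog : ∀ a, p θ a • fderiv ℝ (fun θ' => Real.log (p θ' a)) θ
      = fderiv ℝ (fun θ' => p θ' a) θ := fun a => by
    rw [((hdiff a).hasFDerivAt.log (hpos a).ne').fderiv, smul_smul,
      mul_inv_cancel₀ (hpos a).ne', one_smul]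
  have hconst : (fun θ' => ∑ a, p θ' a) = fun _ => 1 := funext hsum
  simp_rw [hlog, ← fderiv_fun_sum fun a _ => hdiff a, hconst, fderiv_const_apply]

section Trajectories

variable {Act Obs : Type*} {B n : ℕ}

def stepRank (T : ℕ) (b : Fin B) (q : Fin B × Fin n) : ℕ ×ₗ ℕ ×ₗ ℕ :=
  toLex ((q.2 : ℕ) / T, toLex (if q.1 = b then 1 else 0, (q.2 : ℕ)))

variable {T : ℕ} {b : Fin B}

theorem stepRank_lt_of_div_lt {q q' : Fin B × Fin n} (h : (q'.2 : ℕ) / T < (q.2 : ℕ) / T) :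
    stepRank T b q' < stepRank T b q :=
  Prod.Lex.toLex_lt_toLex.2 (Or.inl h)

theorem stepRank_lt_of_lt {c : Fin B} {j' j : Fin n} (h : j' < j) :
    stepRank T b (c, j') < stepRank T b (c, j) := by
  refine Prod.Lex.toLex_lt_toLex'.2 ⟨Nat.div_le_div_right h.le, fun _ => ?_⟩
  exact Prod.Lex.toLex_lt_toLex.2 (Or.inr ⟨rfl, h⟩)

theorem stepRank_lt_of_ne {c : Fin B} {j' j : Fin n} (hc : c ≠ b)
    (h : (j' : ℕ) / T ≤ (j : ℕ) / T) : stepRank T b (c, j') < stepRank T b (b, j) := by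
  refine Prod.Lex.toLex_lt_toLex'.2 ⟨h, fun _ => ?_⟩
  exact Prod.Lex.toLex_lt_toLex.2 (Or.inl (by simp [hc]))

variable {X β : Type*}

theorem dependsOn_curry_of_prefix {f : (Fin B → Fin n → X) → β} {c : Fin B} {j : Fin n}
    (hf : ∀ ω ω', (∀ j' < j, ω c j' = ω' c j') → f ω = f ω') :
    DependsOn (fun ω => f (curry ω)) {q | stepRank T b q < stepRank T b (c, j)} :=
  fun _ _ h => hf _ _ fun _ hj' => h _ (stepRank_lt_of_lt hj')

theorem dependsOn_curry_of_past {f : (Fin B → Fin n → X) → β} {c : Fin B} {j : Fin n}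
    (hf : ∀ ω ω', (∀ j' ≤ j, ω c j' = ω' c j') →
      (∀ (c' : Fin B) (j' : Fin n), (j' : ℕ) / T < (j : ℕ) / T → ω c' j' = ω' c' j') →
      f ω = f ω') :
    DependsOn (fun ω => f (curry ω))
      (insert (c, j) {q | stepRank T b q < stepRank T b (c, j)}) := by
  refine fun _ _ h => hf _ _ (fun j' hj' => ?_) fun _ _ hj' =>
    h _ (.inr (stepRank_lt_of_div_lt hj'))
  rcases hj'.lt_or_eq with hj' | rfl
  · exact h _ (.inr (stepRank_lt_of_lt hj'))
  · exact h _ (.inl rfl)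

variable {Θ H : Type*}

def densityFactor (π : Θ → Act → H → ℝ) (hist : Fin B → Fin n → (Fin B → Fin n → Act × Obs) → H)
    (e : Fin B → Fin n → (Fin B → Fin n → Act × Obs) → ℝ) (θ : Θ) (q : Fin B × Fin n)
    (ω : Fin B × Fin n → Act × Obs) : ℝ :=
  π θ (ω q).1 (hist q.1 q.2 (curry ω)) * e q.1 q.2 (curry ω)

variable {π : Θ → Act → H → ℝ} {hist : Fin B → Fin n → (Fin B → Fin n → Act × Obs) → H}
  {e : Fin B → Fin n → (Fin B → Fin n → Act × Obs) → ℝ}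

theorem dependsOn_densityFactor
    (hhist : ∀ b l ω ω', (∀ l' : Fin n, l' < l → ω b l' = ω' b l') → hist b l ω = hist b l ω')
    (he_dep : ∀ b l ω ω', (∀ l' : Fin n, l' ≤ l → ω b l' = ω' b l') →
      (∀ (b' : Fin B) (l' : Fin n), l'.val / T < l.val / T → ω b' l' = ω' b' l') →
      e b l ω = e b l ω')
    (θ : Θ) (q : Fin B × Fin n) :
    DependsOn (densityFactor π hist e θ q) (insert q {q' | stepRank T b q' < stepRank T b q}) := by
  intro ω ω' h
  have hhist' : hist q.1 q.2 (curry ω) = hist q.1 q.2 (curry ω') :=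
    dependsOn_curry_of_prefix (T := T) (b := b) (hhist q.1 q.2) fun i hi => h i (.inr hi)
  have he' : e q.1 q.2 (curry ω) = e q.1 q.2 (curry ω') :=
    dependsOn_curry_of_past (b := b) (he_dep q.1 q.2) h
  rw [densityFactor, densityFactor, h q (.inl rfl), hhist', he']

theorem sum_env_curry_update_eq_one [Fintype Obs]
    (he_sum : ∀ b l (ω : Fin B → Fin n → Act × Obs), ∑ o : Obs,
      e b l (update ω b (update (ω b) l ((ω b l).1, o))) = 1)
    (q : Fin B × Fin n) (ω : Fin B × Fin n → Act × Obs) (a : Act) :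
    ∑ o, e q.1 q.2 (curry (update ω q (a, o))) = 1 := by
  simpa [curry_update] using
    he_sum q.1 q.2 (curry (update ω q (a, (ω q).2)))

theorem sum_densityFactor_update_smul {E : Type*} [AddCommGroup E] [Module ℝ E]
    [Fintype Act] [Fintype Obs]
    (hhist : ∀ b l ω ω', (∀ l' : Fin n, l' < l → ω b l' = ω' b l') → hist b l ω = hist b l ω')
    (he_sum : ∀ b l (ω : Fin B → Fin n → Act × Obs), ∑ o : Obs,
      e b l (update ω b (update (ω b) l ((ω b l).1, o))) = 1)
    (θ : Θ) (q : Fin B × Fin n) (ω : Fin B × Fin n → Act × Obs) (K : Act → E) :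
    ∑ x, densityFactor π hist e θ q (update ω q x) • K x.1
      = ∑ a, π θ a (hist q.1 q.2 (curry ω)) • K a := by
  have hhist_update : ∀ x, hist q.1 q.2 (curry (update ω q x))
      = hist q.1 q.2 (curry ω) := fun x =>
    hhist _ _ _ _ fun _ hj => update_of_ne (fun h => hj.ne (congrArg Prod.snd h)) _ _
  simp_rw [Fintype.sum_prod_type, densityFactor, update_self, hhist_update]
  refine sum_congr rfl fun a _ => ?_
  rw [← sum_smul, ← mul_sum, sum_env_curry_update_eq_one he_sum, mul_one]

theorem sum_densityFactor_update [Fintype Act] [Fintype Obs]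
    (hhist : ∀ b l ω ω', (∀ l' : Fin n, l' < l → ω b l' = ω' b l') → hist b l ω = hist b l ω')
    (hπsum : ∀ θ h, ∑ a, π θ a h = 1)
    (he_sum : ∀ b l (ω : Fin B → Fin n → Act × Obs), ∑ o : Obs,
      e b l (update ω b (update (ω b) l ((ω b l).1, o))) = 1)
    (θ : Θ) (q : Fin B × Fin n) (ω : Fin B × Fin n → Act × Obs) :
    ∑ x, densityFactor π hist e θ q (update ω q x) = 1 := by
  simpa [hπsum] using sum_densityFactor_update_smul (π := π) hhist he_sum θ q ω (fun _ => (1 : ℝ))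

theorem sum_density_smul_reward_smul_score_eq_zero {V : Type*} [NormedAddCommGroup V]
    [NormedSpace ℝ V] [Fintype Act] [Fintype Obs] {π : V → Act → H → ℝ}
    (hhist : ∀ b l ω ω', (∀ l' : Fin n, l' < l → ω b l' = ω' b l') → hist b l ω = hist b l ω')
    (hπpos : ∀ θ a h, 0 < π θ a h) (hπdiff : ∀ a h, Differentiable ℝ (fun θ => π θ a h))
    (hπsum : ∀ θ h, ∑ a, π θ a h = 1)
    (he_dep : ∀ b l ω ω', (∀ l' : Fin n, l' ≤ l → ω b l' = ω' b l') →
      (∀ (b' : Fin B) (l' : Fin n), l'.val / T < l.val / T → ω b' l' = ω' b' l') →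
      e b l ω = e b l ω')
    (he_sum : ∀ b l (ω : Fin B → Fin n → Act × Obs), ∑ o : Obs,
      e b l (update ω b (update (ω b) l ((ω b l).1, o))) = 1)
    (l : Fin n) (R : (Fin B → Fin n → Act × Obs) → ℝ)
    (hR : DependsOn (fun ω => R (curry ω)) {q | stepRank T b q < stepRank T b (b, l)})
    (θ : V) :
    ∑ ω : Fin B → Fin n → Act × Obs, (∏ c, ∏ j, π θ (ω c j).1 (hist c j ω) * e c j ω) •
      (R ω • fderiv ℝ (fun θ' => Real.log (π θ' (ω b l).1 (hist b l ω))) θ) = 0 := by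
  set G : (Fin B × Fin n → Act × Obs) → V →L[ℝ] ℝ := fun ω => R (curry ω) •
    fderiv ℝ (fun θ' => Real.log (π θ' (ω (b, l)).1 (hist b l (curry ω)))) θ
  have hhist_bl : DependsOn (fun ω => hist b l (curry ω))
      {q | stepRank T b q < stepRank T b (b, l)} :=
    dependsOn_curry_of_prefix (hhist b l)
  have hG : DependsOn G (insert (b, l) {q | stepRank T b q < stepRank T b (b, l)}) :=
    fun ω ω' h => by
      have hR' : R (curry ω) = R (curry ω') := hR fun i hi => h i (.inr hi)
      have hhist' : hist b l (curry ω) = hist b l (curry ω') :=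
        hhist_bl fun i hi => h i (.inr hi)
      simp only [G, hR', hhist', h (b, l) (.inl rfl)]
  have hG_mean : ∀ ω, ∑ x, densityFactor π hist e θ (b, l) (update ω (b, l) x) •
      G (update ω (b, l) x) = 0 := fun ω => by
    have hR' : ∀ x, R (curry (update ω (b, l) x)) = R (curry ω) :=
      hR.apply_update_of_notMem (lt_irrefl (stepRank T b (b, l))) ω
    have hhist' : ∀ x, hist b l (curry (update ω (b, l) x))
        = hist b l (curry ω) :=
      hhist_bl.apply_update_of_notMem (lt_irrefl (stepRank T b (b, l))) ω
    simp only [G, update_self, hR', hhist']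
    rw [sum_densityFactor_update_smul hhist he_sum θ (b, l) ω
      (fun a => R (curry ω) • fderiv ℝ (fun θ' => Real.log (π θ' a _)) θ)]
    simp_rw [smul_comm _ (R _), ← smul_sum]
    rw [sum_smul_fderiv_log_eq_zero (fun θ' a => π θ' a _) θ (fun a => hπpos θ a _)
      (fun a => (hπdiff a _).differentiableAt) (fun θ' => hπsum θ' _), smul_zero]
  rw [← (Equiv.curry _ _ _).sum_comp]
  convert sum_prod_smul_eq_zero_of_dependsOn (stepRank T b) (densityFactor π hist e θ) G (b, l)
    (dependsOn_densityFactor hhist he_dep θ) (sum_densityFactor_update hhist hπsum he_sum θ) hG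
    hG_mean univ (mem_univ _) using 3 with ω
  · rw [Fintype.prod_prod_type]
    rfl
  · rfl

theorem dependsOn_sum_other_rewards {r : Fin B → Fin n → (Fin B → Fin n → Act × Obs) → ℝ}
    (hr_dep : ∀ b l ω ω', (∀ l' : Fin n, l' ≤ l → ω b l' = ω' b l') →
      (∀ (b' : Fin B) (l' : Fin n), l'.val / T < l.val / T → ω b' l' = ω' b' l') →
      r b l ω = r b l ω')
    (l : Fin n) :
    DependsOn (fun ω => ∑ b' ∈ univ.erase b,
        ∑ l' ∈ univ.filter (fun l' : Fin n => l ≤ l' ∧ l'.val / T = l.val / T),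
          r b' l' (curry ω))
      {q | stepRank T b q < stepRank T b (b, l)} := by
  refine fun ω ω' h => sum_congr rfl fun b' hb' => sum_congr rfl fun l' hl' => ?_
  have hl'b : stepRank T b (b', l') < stepRank T b (b, l) :=
    stepRank_lt_of_ne (ne_of_mem_erase hb') (mem_filter.1 hl').2.2.le
  refine dependsOn_curry_of_past (b := b) (hr_dep b' l') fun q hq => h q ?_
  rcases hq with rfl | hq
  exacts [hl'b, lt_trans hq hl'b]

end Trajectories

theorem sum_filter_le_eq_add {M : Type*} [AddCommMonoid M] {n : ℕ} (T : ℕ) (l : Fin n)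
    (f : Fin n → M) :
    ∑ l' ∈ univ.filter (fun l' : Fin n => l ≤ l'), f l'
      = ∑ l' ∈ univ.filter (fun l' : Fin n => l ≤ l' ∧ l'.val / T = l.val / T), f l'
        + ∑ l' ∈ univ.filter (fun l' : Fin n => l.val / T < l'.val / T), f l' := by
  rw [← sum_filter_add_sum_filter_not _ (fun l' : Fin n => l'.val / T = l.val / T),
    filter_filter, filter_filter]
  congr 2
  ext l'
  simp only [mem_filter, mem_univ, true_and]
  constructor
  · exact fun ⟨hle, hne⟩ => (Nat.div_le_div_right hle).lt_of_ne' hne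
  · refine fun hlt => ⟨le_of_not_gt fun hgt => ?_, hlt.ne'⟩
    exact hlt.not_ge (Nat.div_le_div_right hgt.le)

theorem sum_sum_filter_le_eq {M : Type*} [AddCommMonoid M] {B n : ℕ} (T : ℕ) (b : Fin B)
    (l : Fin n) (f : Fin B → Fin n → M) :
    ∑ b', ∑ l' ∈ univ.filter (fun l' : Fin n => l ≤ l'), f b' l'
      = (∑ l' ∈ univ.filter (fun l' : Fin n => l ≤ l' ∧ l'.val / T = l.val / T), f b l'
          + ∑ b', ∑ l' ∈ univ.filter (fun l' : Fin n => l.val / T < l'.val / T), f b' l')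
        + ∑ b' ∈ univ.erase b,
            ∑ l' ∈ univ.filter (fun l' : Fin n => l ≤ l' ∧ l'.val / T = l.val / T), f b' l' := by
  simp_rw [sum_filter_le_eq_add T l, sum_add_distrib, ← add_sum_erase _ _ (mem_univ b)]
  abel

/-- `ω b l` is the action–observation pair of trajectory `b` at step `l`; step `l` lies in inner
episode `l / T`. -/
theorem coala_pg_unbiased_general
    {Act Obs : Type*} [Fintype Act] [Fintype Obs] {d B M T : ℕ}
    (hist : Fin B → Fin (M * T) → (Fin B → Fin (M * T) → Act × Obs) →
      (Fin (M * T) → Option (Act × Obs)))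
    (hhist : ∀ b l ω ω', (∀ l' : Fin (M * T), l' < l → ω b l' = ω' b l') →
      hist b l ω = hist b l ω')
    (π : (Fin d → ℝ) → Act → (Fin (M * T) → Option (Act × Obs)) → ℝ)
    (hπpos : ∀ θ a h, 0 < π θ a h)
    (hπdiff : ∀ a h, Differentiable ℝ (fun θ => π θ a h))
    (hπsum : ∀ θ h, ∑ a : Act, π θ a h = 1)
    (e : Fin B → Fin (M * T) → (Fin B → Fin (M * T) → Act × Obs) → ℝ)
    (he_dep : ∀ b l ω ω',
      (∀ l' : Fin (M * T), l' ≤ l → ω b l' = ω' b l') →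
      (∀ (b' : Fin B) (l' : Fin (M * T)), l'.val / T < l.val / T → ω b' l' = ω' b' l') →
      e b l ω = e b l ω')
    (he_sum : ∀ b l (ω : Fin B → Fin (M * T) → Act × Obs), ∑ o : Obs,
      e b l (Function.update ω b (Function.update (ω b) l ((ω b l).1, o))) = 1)
    (P : (Fin d → ℝ) → (Fin B → Fin (M * T) → Act × Obs) → ℝ)
    (hP : ∀ θ ω, P θ ω = ∏ b, ∏ l, π θ ((ω b l).1) (hist b l ω) * e b l ω)
    (r : Fin B → Fin (M * T) → (Fin B → Fin (M * T) → Act × Obs) → ℝ)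
    (hr_dep : ∀ b l ω ω',
      (∀ l' : Fin (M * T), l' ≤ l → ω b l' = ω' b l') →
      (∀ (b' : Fin B) (l' : Fin (M * T)), l'.val / T < l.val / T → ω b' l' = ω' b' l') →
      r b l ω = r b l ω')
    (θ : Fin d → ℝ) :
    ∑ ω : Fin B → Fin (M * T) → Act × Obs, P θ ω •
      ∑ b, ∑ l,
        (((B : ℝ)⁻¹ * ∑ l' ∈ univ.filter
              (fun l' : Fin (M * T) => l ≤ l' ∧ l'.val / T = l.val / T), r b l' ω)
          + (B : ℝ)⁻¹ * ∑ b', ∑ l' ∈ univ.filter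
              (fun l' : Fin (M * T) => l.val / T < l'.val / T), r b' l' ω) •
          fderiv ℝ (fun θ' => Real.log (π θ' ((ω b l).1) (hist b l ω))) θ
    = ∑ ω : Fin B → Fin (M * T) → Act × Obs, P θ ω •
        ∑ b, ∑ l,
          ((B : ℝ)⁻¹ * ∑ b', ∑ l' ∈ univ.filter
              (fun l' : Fin (M * T) => l ≤ l'), r b' l' ω) •
            fderiv ℝ (fun θ' => Real.log (π θ' ((ω b l).1) (hist b l ω))) θ := by
  conv_rhs => enter [2, ω, 2, 2, b, 2, l, 1]; rw [sum_sum_filter_le_eq T b, mul_add, mul_add]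
  simp_rw [add_smul, sum_add_distrib, smul_add, sum_add_distrib, left_eq_add, smul_sum]
  rw [sum_comm]
  refine sum_eq_zero fun b _ => ?_
  rw [sum_comm]
  refine sum_eq_zero fun l _ => ?_
  simp only [hP]
  exact sum_density_smul_reward_smul_score_eq_zero hhist hπpos hπdiff hπsum he_dep he_sum l _
    (fun _ _ h => congrArg ((B : ℝ)⁻¹ * ·) (dependsOn_sum_other_rewards hr_dep l h)) θ

/-- Unbiasedness of COALA-PG in the batched setting.  A batched trajectory
`ω : Fin B → Fin (M*T) → Act × Obs` consists of `B` parallel trajectories of `M` inner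
episodes of length `T` (step `l` belongs to inner episode `l/T`).  The joint density is
`P θ ω = ∏_b ∏_l π_θ(a_l^b | h_l^b) · e_l^b(ω)`, where the history `h_l^b` depends only
on trajectory `b`'s own strict prefix, and the environment factors `e` (independent of
`θ`, normalized over the next observation) let trajectories interact only through
earlier inner episodes (parameter updates at episode boundaries).  Rewards `r_l^b`
depend only on trajectory `b`'s own steps up to `l` and on all trajectories' steps in
strictly earlier episodes.  Then the COALA-PG estimator, which pairs each score
`∇_θ log π_θ(a_l^b | h_l^b)` with
`(1/B)·Σ_{l'≥l, same episode} r_{l'}^b + (1/B)·Σ_{b'} Σ_{l' in later episodes} r_{l'}^{b'}`,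
has the same expectation as the full estimator pairing the score with
`(1/B)·Σ_{b'} Σ_{l'≥l} r_{l'}^{b'}`: dropping the cross-trajectory reward terms within
the current inner episode does not change the expectation. -/
theorem coala_pg_unbiased
    {Act Obs : Type*} [Fintype Act] [Fintype Obs] {d B M T : ℕ}
    (hB : 1 ≤ B) (hM : 1 ≤ M) (hT : 1 ≤ T)
    (hist : Fin B → Fin (M * T) → (Fin B → Fin (M * T) → Act × Obs) →
      (Fin (M * T) → Option (Act × Obs)))
    (hhist : ∀ b l ω ω', (∀ l' : Fin (M * T), l' < l → ω b l' = ω' b l') →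
      hist b l ω = hist b l ω')
    (π : (Fin d → ℝ) → Act → (Fin (M * T) → Option (Act × Obs)) → ℝ)
    (hπpos : ∀ θ a h, 0 < π θ a h)
    (hπdiff : ∀ a h, Differentiable ℝ (fun θ => π θ a h))
    (hπsum : ∀ θ h, ∑ a : Act, π θ a h = 1)
    (e : Fin B → Fin (M * T) → (Fin B → Fin (M * T) → Act × Obs) → ℝ)
    (he_nn : ∀ b l ω, 0 ≤ e b l ω)
    (he_dep : ∀ b l ω ω',
      (∀ l' : Fin (M * T), l' ≤ l → ω b l' = ω' b l') →
      (∀ (b' : Fin B) (l' : Fin (M * T)), l'.val / T < l.val / T → ω b' l' = ω' b' l') →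
      e b l ω = e b l ω')
    (he_sum : ∀ b l (ω : Fin B → Fin (M * T) → Act × Obs), ∑ o : Obs,
      e b l (Function.update ω b (Function.update (ω b) l ((ω b l).1, o))) = 1)
    (P : (Fin d → ℝ) → (Fin B → Fin (M * T) → Act × Obs) → ℝ)
    (hP : ∀ θ ω, P θ ω = ∏ b, ∏ l, π θ ((ω b l).1) (hist b l ω) * e b l ω)
    (r : Fin B → Fin (M * T) → (Fin B → Fin (M * T) → Act × Obs) → ℝ)
    (hr_dep : ∀ b l ω ω',
      (∀ l' : Fin (M * T), l' ≤ l → ω b l' = ω' b l') →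
      (∀ (b' : Fin B) (l' : Fin (M * T)), l'.val / T < l.val / T → ω b' l' = ω' b' l') →
      r b l ω = r b l ω')
    (θ : Fin d → ℝ) :
    ∑ ω : Fin B → Fin (M * T) → Act × Obs, P θ ω •
      ∑ b, ∑ l,
        (((B : ℝ)⁻¹ * ∑ l' ∈ univ.filter
              (fun l' : Fin (M * T) => l ≤ l' ∧ l'.val / T = l.val / T), r b l' ω)
          + (B : ℝ)⁻¹ * ∑ b', ∑ l' ∈ univ.filter
              (fun l' : Fin (M * T) => l.val / T < l'.val / T), r b' l' ω) •
          fderiv ℝ (fun θ' => Real.log (π θ' ((ω b l).1) (hist b l ω))) θ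
    = ∑ ω : Fin B → Fin (M * T) → Act × Obs, P θ ω •
        ∑ b, ∑ l,
          ((B : ℝ)⁻¹ * ∑ b', ∑ l' ∈ univ.filter
              (fun l' : Fin (M * T) => l ≤ l'), r b' l' ω) •
            fderiv ℝ (fun θ' => Real.log (π θ' ((ω b l).1) (hist b l ω))) θ :=
  coala_pg_unbiased_general hist hhist π hπpos hπdiff hπsum e he_dep he_sum P hP r hr_dep θ
end
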